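/- For a planar convex body D of constant width and a point v on the boundary of D, pdist(v, D) = diam(D). -/

import Mathlib

open MeasureTheory Real Set

noncomputable section

abbrev E2 := EuclideanSpace ℝ (Fin 2)

def uvec (θ : ℝ) : E2 := !₂[Real.cos θ, Real.sin θ]
def rotvec (θ : ℝ) : E2 := !₂[Real.sin θ, -Real.cos θ]

def IsConvexBody (C : Set E2) : Prop :=
  IsCompact C ∧ Convex ℝ C ∧ (interior C).Nonempty

/-- `n θ` is the touching point of the supporting line of `C` with inward normal `uvec θ`. -/
def IsNormalSel (C : Set E2) (n : ℝ → E2) : Prop :=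
  ∀ θ, n θ ∈ C ∧ ∀ y ∈ C, (inner ℝ (n θ) (uvec θ) : ℝ) ≤ inner ℝ y (uvec θ)

/-- pseudodistance computed from normal selections of the two bodies. -/
def pdistN (n₁ n₂ : ℝ → E2) : ℝ :=
  (1/2) * ∫ θ in (0:ℝ)..(2*π), |(inner ℝ (n₁ θ - n₂ θ) (rotvec θ) : ℝ)|

/-- distance from a point to the normal line of a body with normal selection `n`. -/
def pdistP (v : E2) (n : ℝ → E2) : ℝ :=
  (1/2) * ∫ θ in (0:ℝ)..(2*π), |(inner ℝ (v - n θ) (rotvec θ) : ℝ)|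

def hsup (C : Set E2) (θ : ℝ) : ℝ := sSup ((fun x => (inner ℝ x (rotvec θ) : ℝ)) '' C)
def hinf (C : Set E2) (θ : ℝ) : ℝ := sInf ((fun x => (inner ℝ x (rotvec θ) : ℝ)) '' C)

def pperN (C : Set E2) (n : ℝ → E2) : ℝ :=
  (1/2) * ∫ θ in (0:ℝ)..(2*π),
    (|hsup C θ - (inner ℝ (n θ) (rotvec θ) : ℝ)| + |hinf C θ - (inner ℝ (n θ) (rotvec θ) : ℝ)|)

def ConstantWidth (D : Set E2) (w : ℝ) : Prop :=
  ∀ d : E2, ‖d‖ = 1 →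
    sSup ((fun x => (inner ℝ x d : ℝ)) '' D) - sInf ((fun x => (inner ℝ x d : ℝ)) '' D) = w

end

noncomputable section

/-!
Choose `θ₀` so that `v` is a lowest point of `D` in the direction `uvec θ₀`. Constant width
forces `n (θ + π) = n θ + w • uvec θ`, which makes `n` locally Lipschitz, and then the
envelope theorem shows that the distance `G θ = ⟪v - n θ, uvec θ⟫` from `v` to the supporting
line is differentiable with `G' θ = -⟪v - n θ, rotvec θ⟫`. The integrand is `π`-periodic, and
`G' ≥ 0` on `[θ₀, θ₀ + π]` because `v` and its antipode `v + w • uvec θ₀` both lie within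
distance `w` of `n (θ + π)`. So the integral is `G (θ₀ + π) - G θ₀ = w - 0 = diam D`.
-/

open Filter Topology

@[simp] lemma uvec_apply_zero (θ : ℝ) : uvec θ 0 = cos θ := rfl
@[simp] lemma uvec_apply_one (θ : ℝ) : uvec θ 1 = sin θ := rfl
@[simp] lemma rotvec_apply_zero (θ : ℝ) : rotvec θ 0 = sin θ := rfl
@[simp] lemma rotvec_apply_one (θ : ℝ) : rotvec θ 1 = -cos θ := rfl

lemma inner_uvec (x : E2) (θ : ℝ) : inner ℝ x (uvec θ) = x 0 * cos θ + x 1 * sin θ := by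
  simp [PiLp.inner_apply, Fin.sum_univ_two, mul_comm]

lemma inner_rotvec (x : E2) (θ : ℝ) : inner ℝ x (rotvec θ) = x 0 * sin θ - x 1 * cos θ := by
  simp [PiLp.inner_apply, Fin.sum_univ_two, mul_comm, sub_eq_add_neg]

@[simp] lemma norm_uvec (θ : ℝ) : ‖uvec θ‖ = 1 := by
  simp [EuclideanSpace.norm_eq]

@[simp] lemma norm_rotvec (θ : ℝ) : ‖rotvec θ‖ = 1 := by
  simp [EuclideanSpace.norm_eq]

@[simp] lemma inner_uvec_self (θ : ℝ) : inner ℝ (uvec θ) (uvec θ) = 1 := by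
  rw [real_inner_self_eq_norm_sq, norm_uvec, one_pow]

@[simp] lemma inner_uvec_rotvec (θ : ℝ) : inner ℝ (uvec θ) (rotvec θ) = 0 := by
  rw [inner_rotvec, uvec_apply_zero, uvec_apply_one]; ring

@[simp] lemma inner_rotvec_uvec (θ : ℝ) : inner ℝ (rotvec θ) (uvec θ) = 0 := by
  rw [real_inner_comm, inner_uvec_rotvec]

lemma norm_sq_eq_inner_uvec_sq_add_inner_rotvec_sq (x : E2) (θ : ℝ) :
    ‖x‖ ^ 2 = inner ℝ x (uvec θ) ^ 2 + inner ℝ x (rotvec θ) ^ 2 := by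
  rw [inner_uvec, inner_rotvec, EuclideanSpace.norm_sq_eq, Fin.sum_univ_two, Real.norm_eq_abs,
    Real.norm_eq_abs, sq_abs, sq_abs]
  linear_combination (x 0 ^ 2 + x 1 ^ 2) * (sin_sq_add_cos_sq θ).symm

lemma uvec_add_pi (θ : ℝ) : uvec (θ + π) = -uvec θ := by
  ext i; fin_cases i <;> simp [uvec, cos_add_pi, sin_add_pi]

lemma rotvec_add_pi (θ : ℝ) : rotvec (θ + π) = -rotvec θ := by
  ext i; fin_cases i <;> simp [rotvec, cos_add_pi, sin_add_pi]

lemma uvec_eq_cos_smul_add_sin_smul (a t : ℝ) :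
    uvec a = cos (t - a) • uvec t + sin (t - a) • rotvec t := by
  ext i; fin_cases i
  · show cos a = cos (t - a) * cos t + sin (t - a) * sin t
    rw [cos_sub, sin_sub]
    linear_combination (-cos a) * sin_sq_add_cos_sq t
  · show sin a = cos (t - a) * sin t + sin (t - a) * -cos t
    rw [cos_sub, sin_sub]
    linear_combination (-sin a) * sin_sq_add_cos_sq t

lemma norm_uvec_sub_uvec_le (t s : ℝ) : ‖uvec t - uvec s‖ ≤ |t - s| := by
  have h : ‖uvec t - uvec s‖ ^ 2 = 2 - 2 * cos (t - s) := by
    rw [norm_sub_sq_real, norm_uvec, norm_uvec, inner_uvec, cos_sub, uvec_apply_zero,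
      uvec_apply_one]
    ring
  rw [← sq_le_sq₀ (norm_nonneg _) (abs_nonneg _), h, sq_abs]
  linarith [one_sub_sq_div_two_le_cos (x := t - s)]

lemma continuous_rotvec : Continuous rotvec := by
  unfold rotvec; fun_prop

lemma hasDerivAt_inner_uvec (x : E2) (t : ℝ) :
    HasDerivAt (fun s => inner ℝ x (uvec s)) (-inner ℝ x (rotvec t)) t := by
  simp only [inner_uvec, inner_rotvec]
  exact (((hasDerivAt_cos t).const_mul (x 0)).add ((hasDerivAt_sin t).const_mul (x 1))).congr_deriv
    (by ring)

lemma exists_eq_norm_smul_uvec (x : E2) : ∃ θ, x = ‖x‖ • uvec θ := by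
  set z : ℂ := ⟨x 0, x 1⟩
  have hz : ‖z‖ = ‖x‖ := by
    rw [Complex.norm_def, Complex.normSq_apply, EuclideanSpace.norm_eq, Fin.sum_univ_two]
    simp [z, sq]
  refine ⟨Complex.arg z, ?_⟩
  ext i; fin_cases i
  · simp [← hz, Complex.norm_mul_cos_arg, z]
  · simp [← hz, Complex.norm_mul_sin_arg, z]

lemma eq_smul_of_norm_le_of_inner_eq {F : Type*} [NormedAddCommGroup F] [InnerProductSpace ℝ F]
    {x u : F} {w : ℝ} (hu : ‖u‖ = 1) (hx : ‖x‖ ≤ w) (hxu : inner ℝ x u = w) : x = w • u := by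
  have hnorm : ‖x‖ = w :=
    le_antisymm hx (hxu ▸ (real_inner_le_norm x u).trans (by rw [hu, mul_one]))
  have := inner_eq_norm_mul_iff_real.1 (by rw [hxu, hu, hnorm, mul_one])
  rwa [hu, one_smul, hnorm] at this

lemma nonpos_of_halfplane_of_two_disks {A B c s w : ℝ} (hs : 0 ≤ s) (hcs : c ^ 2 + s ^ 2 = 1)
    (hA₀ : 0 ≤ A) (hAw : A ≤ w) (hhalf : c * A + s * B ≤ 0) (hdisk₁ : (A - w) ^ 2 + B ^ 2 ≤ w ^ 2)
    (hdisk₂ : (A + w * c - w) ^ 2 + (B + w * s) ^ 2 ≤ w ^ 2) : B ≤ 0 := by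
  by_contra! hB
  rcases lt_or_ge c 0 with hc | hc
  · nlinarith [mul_nonneg (sub_nonneg.2 hAw) (mul_nonneg (hA₀.trans hAw) (neg_nonneg.2 hc.le)),
      mul_nonneg (hA₀.trans hAw) hs]
  · rcases hs.eq_or_lt with rfl | hs
    · have hc1 : c = 1 := by nlinarith
      subst hc1
      nlinarith
    · nlinarith [mul_nonneg hc hA₀, mul_pos hs hB]

lemma exists_uvec_forall_inner_le {D : Set E2} (hconv : Convex ℝ D) (hint : (interior D).Nonempty)
    {v : E2} (hv : v ∉ interior D) :
    ∃ θ, ∀ y ∈ D, inner ℝ v (uvec θ) ≤ inner ℝ y (uvec θ) := by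
  obtain ⟨f, c, hf0, hfD, hfv⟩ := geometric_hahn_banach_of_nonempty_interior hconv
    (convex_singleton v) (disjoint_singleton_right.2 hv) hint (singleton_nonempty v)
  set z := (InnerProductSpace.toDual ℝ E2).symm f
  have hz : ∀ x, inner ℝ x z = f x := fun x => by
    rw [real_inner_comm, InnerProductSpace.toDual_symm_apply]
  have hz0 : 0 < ‖z‖ := norm_pos_iff.2 (by simpa [z] using hf0)
  obtain ⟨θ, hθ⟩ := exists_eq_norm_smul_uvec (-z)
  have hinner : ∀ x, ‖z‖ * inner ℝ x (uvec θ) = -f x := fun x => by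
    rw [← hz, ← inner_neg_right, hθ, norm_neg, real_inner_smul_right]
  refine ⟨θ, fun y hy => le_of_mul_le_mul_left ?_ hz0⟩
  rw [hinner, hinner]
  linarith [hfD y hy, hfv v rfl]

namespace IsNormalSel

variable {D : Set E2} {n : ℝ → E2} {w : ℝ}

lemma inner_le_inner_add_pi (hn : IsNormalSel D n) (θ : ℝ) {y : E2} (hy : y ∈ D) :
    inner ℝ y (uvec θ) ≤ inner ℝ (n (θ + π)) (uvec θ) := by
  have := (hn (θ + π)).2 y hy
  rwa [uvec_add_pi, inner_neg_right, inner_neg_right, neg_le_neg_iff] at this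

lemma abs_inner_sub_uvec_le (hn : IsNormalSel D n) (t θ : ℝ) :
    |inner ℝ (n t - n θ) (uvec t)| ≤ ‖n t - n θ‖ * ‖uvec t - uvec θ‖ := by
  have hle : inner ℝ (n t - n θ) (uvec t) ≤ 0 := by
    rw [inner_sub_left, sub_nonpos]; exact (hn t).2 _ (hn θ).1
  have hge : 0 ≤ inner ℝ (n t - n θ) (uvec θ) := by
    rw [inner_sub_left, sub_nonneg]; exact (hn θ).2 _ (hn t).1
  have hcs := abs_real_inner_le_norm (n t - n θ) (uvec t - uvec θ)
  rw [inner_sub_right, abs_le] at hcs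
  rw [abs_of_nonpos hle]
  linarith

lemma inner_sub_eq_width (hn : IsNormalSel D n) (hw : ConstantWidth D w) (θ : ℝ) :
    inner ℝ (n (θ + π) - n θ) (uvec θ) = w := by
  have hmax : IsGreatest ((fun x => inner ℝ x (uvec θ)) '' D) (inner ℝ (n (θ + π)) (uvec θ)) :=
    ⟨mem_image_of_mem _ (hn _).1, forall_mem_image.2 fun y hy => hn.inner_le_inner_add_pi θ hy⟩
  have hmin : IsLeast ((fun x => inner ℝ x (uvec θ)) '' D) (inner ℝ (n θ) (uvec θ)) :=
    ⟨mem_image_of_mem _ (hn θ).1, forall_mem_image.2 (hn θ).2⟩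
  rw [inner_sub_left, ← hw _ (norm_uvec θ), hmax.csSup_eq, hmin.csInf_eq]

lemma norm_sub_le_width (hn : IsNormalSel D n) (hw : ConstantWidth D w) {x y : E2}
    (hx : x ∈ D) (hy : y ∈ D) : ‖x - y‖ ≤ w := by
  obtain ⟨θ, hθ⟩ := exists_eq_norm_smul_uvec (x - y)
  have hxy : inner ℝ (x - y) (uvec θ) = ‖x - y‖ := by
    conv_lhs => rw [hθ]
    simp [real_inner_smul_left]
  rw [← hxy, ← hn.inner_sub_eq_width hw θ, inner_sub_left, inner_sub_left]
  linarith [hn.inner_le_inner_add_pi θ hx, (hn θ).2 y hy]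

lemma width_nonneg (hn : IsNormalSel D n) (hw : ConstantWidth D w) : 0 ≤ w := by
  simpa using hn.norm_sub_le_width hw (hn 0).1 (hn 0).1

lemma add_pi_eq_of_forall_inner_le (hn : IsNormalSel D n) (hw : ConstantWidth D w)
    {v : E2} {θ : ℝ} (hv : v ∈ D)
    (hvmin : ∀ y ∈ D, inner ℝ v (uvec θ) ≤ inner ℝ y (uvec θ)) :
    n (θ + π) = v + w • uvec θ := by
  have hvθ : inner ℝ v (uvec θ) = inner ℝ (n θ) (uvec θ) :=
    le_antisymm (hvmin _ (hn θ).1) ((hn θ).2 v hv)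
  rw [← sub_eq_iff_eq_add']
  refine eq_smul_of_norm_le_of_inner_eq (norm_uvec θ) (hn.norm_sub_le_width hw (hn _).1 hv) ?_
  rw [inner_sub_left, hvθ, ← inner_sub_left, hn.inner_sub_eq_width hw]

lemma add_pi_eq (hn : IsNormalSel D n) (hw : ConstantWidth D w) (θ : ℝ) :
    n (θ + π) = n θ + w • uvec θ :=
  hn.add_pi_eq_of_forall_inner_le hw (hn θ).1 (hn θ).2

lemma diam_eq (hn : IsNormalSel D n) (hw : ConstantWidth D w) : Metric.diam D = w := by
  have hdist : ∀ x ∈ D, ∀ y ∈ D, dist x y ≤ w := fun x hx y hy => by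
    rw [dist_eq_norm]; exact hn.norm_sub_le_width hw hx hy
  refine le_antisymm (Metric.diam_le_of_forall_dist_le (hn.width_nonneg hw) hdist) ?_
  calc w = dist (n (0 + π)) (n 0) := by
        rw [dist_eq_norm, hn.add_pi_eq hw 0, add_sub_cancel_left, norm_smul, norm_uvec, mul_one,
          Real.norm_of_nonneg (hn.width_nonneg hw)]
    _ ≤ Metric.diam D :=
        Metric.dist_le_diam_of_mem (Metric.isBounded_iff.2 ⟨w, hdist⟩) (hn _).1 (hn 0).1

lemma inner_sub_rotvec_add_pi (hn : IsNormalSel D n) (hw : ConstantWidth D w) (v : E2)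
    (θ : ℝ) : inner ℝ (v - n (θ + π)) (rotvec (θ + π)) = -inner ℝ (v - n θ) (rotvec θ) := by
  rw [hn.add_pi_eq hw θ, rotvec_add_pi, inner_neg_right, ← sub_sub, inner_sub_left,
    real_inner_smul_left, inner_uvec_rotvec, mul_zero, sub_zero]

lemma norm_sub_le_of_abs_le (hn : IsNormalSel D n) (hw : ConstantWidth D w) {a t : ℝ}
    (hat : |t - a| ≤ π / 2) : ‖n t - n a‖ ≤ 2 * w * |t - a| := by
  wlog h : a ≤ t generalizing a t
  · rw [norm_sub_rev, abs_sub_comm] at *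
    exact this hat (le_of_not_ge h)
  rw [abs_of_nonneg (sub_nonneg.2 h)] at *
  set x := n t - n a
  have hxt : inner ℝ x (uvec t) ≤ 0 := by
    rw [inner_sub_left, sub_nonpos]; exact (hn t).2 _ (hn a).1
  have hsq : ‖x‖ ^ 2 ≤ 2 * w * inner ℝ x (uvec a) := by
    have hfar : ‖x - w • uvec a‖ ≤ w := by
      have := hn.norm_sub_le_width hw (hn t).1 (hn (a + π)).1
      rwa [hn.add_pi_eq hw a, ← sub_sub] at this
    have := pow_le_pow_left₀ (norm_nonneg _) hfar 2
    rw [norm_sub_sq_real, real_inner_smul_right, norm_smul, norm_uvec, mul_one,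
      Real.norm_eq_abs, sq_abs] at this
    linarith
  have hxa : inner ℝ x (uvec a) ≤ sin (t - a) * ‖x‖ := by
    have hcos : 0 ≤ cos (t - a) := cos_nonneg_of_mem_Icc ⟨by linarith [pi_pos], hat⟩
    have hrot : inner ℝ x (rotvec t) ≤ ‖x‖ := by
      simpa using real_inner_le_norm x (rotvec t)
    rw [uvec_eq_cos_smul_add_sin_smul a t, inner_add_right, real_inner_smul_right,
      real_inner_smul_right]
    have hsin : 0 ≤ sin (t - a) := sin_nonneg_of_nonneg_of_le_pi (by linarith) (by linarith)
    nlinarith [mul_nonpos_of_nonneg_of_nonpos hcos hxt, mul_le_mul_of_nonneg_left hrot hsin]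
  have hw0 := hn.width_nonneg hw
  have hsin_le : sin (t - a) ≤ t - a := sin_le (by linarith)
  rcases (norm_nonneg x).eq_or_lt with hx | hx
  · rw [← hx]; positivity
  · nlinarith [mul_le_mul_of_nonneg_left hsin_le (mul_nonneg hw0 hx.le)]

protected lemma continuous (hn : IsNormalSel D n) (hw : ConstantWidth D w) : Continuous n := by
  refine continuous_iff_continuousAt.2 fun a => ?_
  rw [ContinuousAt, tendsto_iff_norm_sub_tendsto_zero]
  have hnear : ∀ᶠ t in 𝓝 a, ‖n t - n a‖ ≤ 2 * w * |t - a| := by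
    filter_upwards [Metric.closedBall_mem_nhds a (by positivity : (0 : ℝ) < π / 2)] with t ht
    exact hn.norm_sub_le_of_abs_le hw ((Real.dist_eq t a) ▸ ht)
  refine squeeze_zero' (Eventually.of_forall fun _ => norm_nonneg _) hnear ?_
  simpa using ((continuous_sub_right a).abs.const_mul (2 * w)).tendsto a

lemma hasDerivAt_inner_sub_uvec (hn : IsNormalSel D n) (hw : ConstantWidth D w) (v : E2)
    (θ : ℝ) :
    HasDerivAt (fun t => inner ℝ (v - n t) (uvec t)) (-inner ℝ (v - n θ) (rotvec θ)) θ := by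
  set e : ℝ → ℝ := fun t => inner ℝ (n t - n θ) (uvec t)
  have he : e =O[𝓝 θ] fun t => ‖t - θ‖ ^ 2 := by
    refine Asymptotics.IsBigO.of_bound (2 * w) ?_
    filter_upwards [Metric.closedBall_mem_nhds θ (by positivity : (0 : ℝ) < π / 2)] with t ht
    rw [Metric.mem_closedBall, Real.dist_eq] at ht
    calc ‖e t‖ ≤ ‖n t - n θ‖ * ‖uvec t - uvec θ‖ := hn.abs_inner_sub_uvec_le t θ
      _ ≤ 2 * w * |t - θ| * |t - θ| :=
        mul_le_mul (hn.norm_sub_le_of_abs_le hw ht) (norm_uvec_sub_uvec_le t θ)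
          (norm_nonneg _) (by have := hn.width_nonneg hw; positivity)
      _ = 2 * w * ‖‖t - θ‖ ^ 2‖ := by simp [sq, mul_assoc]
  have he' : HasDerivAt e 0 θ := by
    simpa using (he.hasFDerivAt (𝕜 := ℝ) one_lt_two).hasDerivAt
  have hsplit : (fun t => inner ℝ (v - n t) (uvec t)) =
      fun t => inner ℝ (v - n θ) (uvec t) - e t := by
    ext t; simp only [e, ← inner_sub_left]; congr 1; abel
  rw [hsplit]
  exact ((hasDerivAt_inner_uvec (v - n θ) θ).sub he').congr_deriv (sub_zero _)

lemma inner_sub_rotvec_nonpos (hn : IsNormalSel D n) (hw : ConstantWidth D w) {v : E2}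
    {θ₀ t : ℝ} (hv : v ∈ D) (hvmin : ∀ y ∈ D, inner ℝ v (uvec θ₀) ≤ inner ℝ y (uvec θ₀))
    (ht₀ : θ₀ ≤ t) (ht₁ : t ≤ θ₀ + π) : inner ℝ (v - n t) (rotvec t) ≤ 0 := by
  have hu := uvec_eq_cos_smul_add_sin_smul θ₀ t
  -- `D` lies in the disk of radius `w` about `n (t + π) = n t + w • uvec t`, in the frame
  -- `(uvec t, rotvec t)` centred at `n t`
  have hdisk : ∀ y ∈ D,
      (inner ℝ (y - n t) (uvec t) - w) ^ 2 + inner ℝ (y - n t) (rotvec t) ^ 2 ≤ w ^ 2 := by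
    intro y hy
    have hyw := hn.norm_sub_le_width hw hy (hn (t + π)).1
    rw [hn.add_pi_eq hw t, ← sub_sub] at hyw
    have := pow_le_pow_left₀ (norm_nonneg _) hyw 2
    simpa [norm_sq_eq_inner_uvec_sq_add_inner_rotvec_sq _ t, inner_sub_left,
      real_inner_smul_left] using this
  have hv' : v + w • uvec θ₀ ∈ D := hn.add_pi_eq_of_forall_inner_le hw hv hvmin ▸ (hn _).1
  refine nonpos_of_halfplane_of_two_disks (c := cos (t - θ₀))
    (sin_nonneg_of_nonneg_of_le_pi (by linarith) (by linarith)) (cos_sq_add_sin_sq _)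
    ?_ ?_ ?_ (hdisk v hv) ?_
  · rw [inner_sub_left, sub_nonneg]; exact (hn t).2 v hv
  · have := hn.inner_le_inner_add_pi t hv
    rw [hn.add_pi_eq hw t, inner_add_left, real_inner_smul_left, inner_uvec_self] at this
    rw [inner_sub_left]; linarith
  · have := hvmin _ (hn t).1
    rw [← sub_nonpos, ← inner_sub_left, hu] at this
    simpa [inner_add_right, real_inner_smul_right] using this
  · convert hdisk _ hv' using 2 <;>
      simp [hu, sub_add_eq_add_sub, inner_add_left, inner_sub_left, real_inner_smul_left]

end IsNormalSel

theorem pdist_of_boundary_point (D : Set E2) (hD : IsConvexBody D)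
    (w : ℝ) (hw : ConstantWidth D w)
    (n : ℝ → E2) (hn : IsNormalSel D n)
    (v : E2) (hv : v ∈ frontier D) :
    ∫ θ in (0:ℝ)..π, |(inner ℝ (v - n θ) (rotvec θ) : ℝ)| = Metric.diam D := by
  obtain ⟨hcompact, hconvex, hinterior⟩ := hD
  have hvD : v ∈ D := frontier_subset_iff_isClosed.2 hcompact.isClosed hv
  obtain ⟨θ₀, hθ₀⟩ := exists_uvec_forall_inner_le hconvex hinterior hv.2
  have hperiodic : Function.Periodic (fun θ => |(inner ℝ (v - n θ) (rotvec θ) : ℝ)|) π :=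
    fun θ => by dsimp only; rw [hn.inner_sub_rotvec_add_pi hw v θ, abs_neg]
  have hcont : Continuous fun θ => (inner ℝ (v - n θ) (rotvec θ) : ℝ) :=
    (continuous_const.sub (hn.continuous hw)).inner continuous_rotvec
  have hvθ₀ : inner ℝ (v - n θ₀) (uvec θ₀) = 0 := by
    rw [inner_sub_left, sub_eq_zero]
    exact le_antisymm (hθ₀ _ (hn θ₀).1) ((hn θ₀).2 v hvD)
  calc ∫ θ in (0:ℝ)..π, |(inner ℝ (v - n θ) (rotvec θ) : ℝ)|
      = ∫ θ in θ₀..θ₀ + π, |(inner ℝ (v - n θ) (rotvec θ) : ℝ)| := by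
        simpa using hperiodic.intervalIntegral_add_eq 0 θ₀
    _ = ∫ θ in θ₀..θ₀ + π, -(inner ℝ (v - n θ) (rotvec θ) : ℝ) := by
        refine intervalIntegral.integral_congr fun t ht => abs_of_nonpos ?_
        rw [uIcc_of_le (by linarith [pi_pos])] at ht
        exact hn.inner_sub_rotvec_nonpos hw hvD hθ₀ ht.1 ht.2
    _ = inner ℝ (v - n (θ₀ + π)) (uvec (θ₀ + π)) - inner ℝ (v - n θ₀) (uvec θ₀) :=
        intervalIntegral.integral_eq_sub_of_hasDerivAt
          (fun t _ => hn.hasDerivAt_inner_sub_uvec hw v t) (hcont.neg.intervalIntegrable _ _)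
    _ = w := by
        simp [hn.add_pi_eq_of_forall_inner_le hw hvD hθ₀, uvec_add_pi, hvθ₀, real_inner_smul_left]
    _ = Metric.diam D := (hn.diam_eq hw).symm

end
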